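/- Let P ∈ D̂_1^sym be a regular operator with ord(P) = k > 0 whose symbol action on the space F of constant-coefficient operators is injective. Then there exists an invertible operator S ∈ D̂_1^sym with ord(S) = 0 and constant term 1 such that P = S^{−1} ∂^k S. -/

import Mathlib

/-!
STATEMENT 19: Let `P ∈ D̂₁^sym` be a regular operator with `ord P = k > 0`
(regular: the symbol action `f ↦ π(f ∘ σ(P))` on the space `F` of
constant-coefficient operators is injective). Then there exists an invertible
`S ∈ D̂₁^sym` with `ord S = 0` and constant term 1 (zeroth slice equal to `1`)
such that `P = S⁻¹ ∂^k S`.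
-/

open MvPowerSeries

noncomputable section

variable {K : Type*} [Field K] [CharZero K]

def dg (k : Fin 1 → ℕ) : ℕ := ∑ i, k i

def dgF (μ : Fin 1 →₀ ℕ) : ℕ := μ.sum fun _ e => e

abbrev Op (K : Type*) [Field K] := (Fin 1 → ℕ) → MvPowerSeries (Fin 1) K

def ord (P : Op K) : EReal :=
  ⨆ (k : Fin 1 → ℕ) (μ : Fin 1 →₀ ℕ) (_ : MvPowerSeries.coeff μ (P k) ≠ 0),
    ((((dg k : ℤ) - (dgF μ : ℤ) : ℤ) : ℝ) : EReal)

def Dmulti (j : Fin 1 → ℕ) (b : MvPowerSeries (Fin 1) K) : MvPowerSeries (Fin 1) K :=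
  fun ν => (∏ i, (((ν i + j i).factorial / (ν i).factorial : ℕ) : K)) *
    MvPowerSeries.coeff (ν + Finsupp.equivFunOnFinite.symm j) b

open Classical in
def opMul (P Q : Op K) : Op K :=
  fun m => fun μ =>
    ∑ᶠ (k : Fin 1 → ℕ) (j : Fin 1 → ℕ),
      if j ≤ k ∧ (fun i => k i - j i) ≤ m then
        ((∏ i, ((k i).choose (j i)) : ℕ) : K) *
          MvPowerSeries.coeff μ (P k * Dmulti j (Q (fun i => m i - (k i - j i))))
      else 0

open Classical in
/-- the identity operator -/
def opOne : Op K := fun k => if k = 0 then 1 else 0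

open Classical in
/-- the operator `∂^k` -/
def delPow (k : ℕ) : Op K := fun j => if j = (fun _ => k) then 1 else 0

open Classical in
/-- the homogeneous component of ord-degree `d`; for `d = ord P` this is the
highest symbol `σ(P)` -/
def opComp (P : Op K) (d : ℤ) : Op K :=
  fun k => fun μ =>
    if ((dg k : ℤ) - (dgF μ : ℤ)) = d then MvPowerSeries.coeff μ (P k) else 0

/-- the projection `π : D̂₁^sym → F = D̂₁^sym/(x)D̂₁^sym` -/
def piMap (P : Op K) : (Fin 1 → ℕ) → K :=
  fun k => MvPowerSeries.constantCoeff (P k)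

/-- the lift of an element of `F` to a constant-coefficient operator -/
def liftF (f : (Fin 1 → ℕ) →₀ K) : Op K :=
  fun k => MvPowerSeries.C (f k)

/-!
An operator `P` of finite order is determined by its right action on `F`, whose matrix in the
basis `(∂ⁿ)` is `act P`; every row-finite matrix arises this way, and composition of operators
becomes multiplication of matrices. If `ord P = k`, the matrix `M = act P` vanishes beyond its
`k`-th superdiagonal, and regularity of `P` says that the entries `M n (n + k)` on it are nonzero.
Let `C` be the matrix whose first `k` rows are those of the identity and whose row `n + k` is
row `n` of `C * M`. Then `Δ * C = C * M` for the shift `Δ = act ∂ᵏ`, and `C` is lower triangular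
with nonzero diagonal, hence invertible. So the operator `S` with `act S = C` satisfies
`P = S⁻¹ ∂ᵏ S`; its order is `0` and its constant term, the first row of `C`, is that of `1`.
-/

open Finset

theorem Nat.add_descFactorial_eq (x y b : ℕ) : (x + y).descFactorial b =
    ∑ ij ∈ antidiagonal b, b.choose ij.1 * (x.descFactorial ij.1 * y.descFactorial ij.2) := by
  have h := Ring.descPochhammer_smeval_add (R := ℤ) b (Commute.all (x : ℤ) y)
  simp only [← Nat.cast_add, Polynomial.descPochhammer_smeval_eq_descFactorial] at h
  exact_mod_cast h

section Sums

variable {M : Type*} [AddCommMonoid M]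

lemma finsum_eq_sum_range {f : ℕ → M} {N : ℕ} (h : ∀ i, N ≤ i → f i = 0) :
    ∑ᶠ i, f i = ∑ i ∈ range N, f i :=
  finsum_eq_sum_of_support_subset f fun i hi => mem_range.2 (not_le.1 fun hN => hi (h i hN))

lemma sum_range_eq_sum_range {f : ℕ → M} {L N N' : ℕ} (h : ∀ i, L ≤ i → f i = 0) (hN : L ≤ N)
    (hN' : L ≤ N') : ∑ i ∈ range N, f i = ∑ i ∈ range N', f i := by
  rw [eventually_constant_sum h hN, eventually_constant_sum h hN']

lemma sum_range_sum_antidiagonal {f : ℕ → ℕ → M} {N : ℕ} (h : ∀ a b, N ≤ a + b → f a b = 0) :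
    ∑ i ∈ range N, ∑ ab ∈ antidiagonal i, f ab.1 ab.2 = ∑ a ∈ range N, ∑ b ∈ range N, f a b := by
  simp_rw [Nat.sum_antidiagonal_eq_sum_range_succ f, sum_range_diag_flip]
  refine sum_congr rfl fun a ha => sum_range_eq_sum_range (L := N - a) (fun b hb => h a b ?_) ?_ ?_
  all_goals simp only [mem_range] at ha; omega

lemma sum_range_ite_le_sub {f : ℕ → ℕ → M} {d N : ℕ} (hd : d ≤ N)
    (h : ∀ κ, N - d ≤ κ → f κ (d + κ) = 0) :
    ∑ t ∈ range N, (if d ≤ t then f (t - d) t else 0) = ∑ κ ∈ range N, f κ (d + κ) := by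
  obtain ⟨r, rfl⟩ := Nat.exists_eq_add_of_le hd
  rw [sum_range_add, sum_eq_zero fun t ht => if_neg (by simpa using ht), zero_add]
  rw [sum_range_eq_sum_range (f := fun κ => f κ (d + κ)) (fun κ hκ => h κ (by omega)) (by omega)
    (le_refl r)]
  exact sum_congr rfl fun κ _ => by rw [if_pos (by omega), Nat.add_sub_cancel_left]

end Sums

section RowFiniteMatrix

variable {R : Type*}

def BandedAbove [Zero R] (A : Matrix ℕ ℕ R) (c : ℕ) : Prop := ∀ n s, n + c < s → A n s = 0

def matMul [Semiring R] (A B : Matrix ℕ ℕ R) : Matrix ℕ ℕ R :=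
  Matrix.of fun n s => ∑ᶠ t, A n t * B t s

section Semiring

variable [Semiring R] {A B : Matrix ℕ ℕ R} {c d : ℕ}

lemma matMul_apply_of_bandedAbove (hA : BandedAbove A c) (B : Matrix ℕ ℕ R) (n s : ℕ) :
    matMul A B n s = ∑ t ∈ range (n + c + 1), A n t * B t s := by
  refine finsum_eq_sum_of_support_subset _ fun t ht => ?_
  by_contra hlt
  simp_all [hA n t (by simpa using hlt)]

lemma BandedAbove.matMul (hA : BandedAbove A c) (hB : BandedAbove B d) :
    BandedAbove (matMul A B) (c + d) := fun n s h => by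
  rw [matMul_apply_of_bandedAbove hA]
  exact sum_eq_zero fun t ht => by rw [hB t s (by simp only [mem_range] at ht; omega), mul_zero]

lemma matMul_assoc (hA : BandedAbove A c) (hB : BandedAbove B d) (C : Matrix ℕ ℕ R) :
    matMul (matMul A B) C = matMul A (matMul B C) := by
  ext n s
  have hAB := hA.matMul hB
  rw [matMul_apply_of_bandedAbove hAB, matMul_apply_of_bandedAbove hA]
  simp_rw [matMul_apply_of_bandedAbove hA, matMul_apply_of_bandedAbove hB, sum_mul, mul_sum]
  rw [sum_comm]
  refine sum_congr rfl fun r hr => ?_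
  refine (sum_subset (fun t ht => ?_) fun t _ ht => ?_).symm.trans
    (sum_congr rfl fun t _ => mul_assoc _ _ _)
  · simp only [mem_range] at hr ht ⊢; omega
  · simp only [mem_range] at hr ht
    rw [hB r t (by omega), mul_zero, zero_mul]

lemma bandedAbove_one : BandedAbove (1 : Matrix ℕ ℕ R) 0 := fun n s h => by
  simp [Matrix.one_apply]; omega

lemma one_matMul (A : Matrix ℕ ℕ R) : matMul 1 A = A := by
  ext n s
  simp [matMul_apply_of_bandedAbove bandedAbove_one, Matrix.one_apply]

lemma matMul_one (hA : BandedAbove A c) : matMul A 1 = A := by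
  ext n s
  rw [matMul_apply_of_bandedAbove hA]
  simp only [Matrix.one_apply, mul_ite, mul_one, mul_zero, sum_ite_eq', mem_range]
  split_ifs with h
  · rfl
  · exact (hA n s (by omega)).symm

def shiftMatrix (k : ℕ) : Matrix ℕ ℕ R := Matrix.of fun n s => if s = n + k then 1 else 0

lemma bandedAbove_shiftMatrix (k : ℕ) : BandedAbove (shiftMatrix k : Matrix ℕ ℕ R) k :=
  fun n s h => by simp [shiftMatrix]; omega

lemma shiftMatrix_zero : (shiftMatrix 0 : Matrix ℕ ℕ R) = 1 := by
  ext n s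
  simp [shiftMatrix, Matrix.one_apply, eq_comm]

lemma shiftMatrix_matMul (k : ℕ) (A : Matrix ℕ ℕ R) (n s : ℕ) :
    matMul (shiftMatrix k) A n s = A (n + k) s := by
  rw [matMul_apply_of_bandedAbove (bandedAbove_shiftMatrix k)]
  simp [shiftMatrix]

end Semiring

section DivisionRing

variable [DivisionRing R] {A : Matrix ℕ ℕ R}

def lowerInv (A : Matrix ℕ ℕ R) : Matrix ℕ ℕ R := fun n s =>
  (A n n)⁻¹ * ((1 : Matrix ℕ ℕ R) n s - ∑ t : Fin n, A n t * lowerInv A t s)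

lemma lowerInv_apply (A : Matrix ℕ ℕ R) (n s : ℕ) : lowerInv A n s =
    (A n n)⁻¹ * ((1 : Matrix ℕ ℕ R) n s - ∑ t ∈ range n, A n t * lowerInv A t s) := by
  rw [lowerInv, Fin.sum_univ_eq_sum_range (fun t => A n t * lowerInv A t s)]

lemma bandedAbove_lowerInv (A : Matrix ℕ ℕ R) : BandedAbove (lowerInv A) 0 := by
  intro n s h
  induction n using Nat.strong_induction_on with
  | _ n ih =>
    rw [lowerInv_apply, Matrix.one_apply_ne (by omega), sum_eq_zero fun t ht => ?_, sub_zero,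
      mul_zero]
    rw [mem_range] at ht
    rw [ih t ht (by omega), mul_zero]

lemma lowerInv_apply_self (A : Matrix ℕ ℕ R) (n : ℕ) : lowerInv A n n = (A n n)⁻¹ := by
  rw [lowerInv_apply, Matrix.one_apply_eq, sum_eq_zero fun t ht => ?_, sub_zero, mul_one]
  rw [bandedAbove_lowerInv A t n (by simpa using ht), mul_zero]

lemma matMul_lowerInv (hA : BandedAbove A 0) (hdiag : ∀ n, A n n ≠ 0) :
    matMul A (lowerInv A) = 1 := by
  ext n s
  rw [matMul_apply_of_bandedAbove hA, add_zero, sum_range_succ, lowerInv_apply,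
    mul_inv_cancel_left₀ (hdiag n), add_sub_cancel]

lemma lowerInv_matMul (hA : BandedAbove A 0) (hdiag : ∀ n, A n n ≠ 0) :
    matMul (lowerInv A) A = 1 := by
  have hB := bandedAbove_lowerInv A
  have hBC := matMul_lowerInv hB fun n => by simp [lowerInv_apply_self, hdiag n]
  -- `A` and `lowerInv (lowerInv A)` are a left and a right inverse of `lowerInv A`.
  have hAC : A = lowerInv (lowerInv A) := calc
    A = matMul A (matMul (lowerInv A) (lowerInv (lowerInv A))) := by rw [hBC, matMul_one hA]
    _ = lowerInv (lowerInv A) := by rw [← matMul_assoc hA hB, matMul_lowerInv hA hdiag, one_matMul]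
  exact (congrArg (matMul (lowerInv A)) hAC).trans hBC

end DivisionRing

section Conjugator

variable [Semiring R] {M : Matrix ℕ ℕ R} {k : ℕ}

def conjugator (M : Matrix ℕ ℕ R) (k : ℕ) : Matrix ℕ ℕ R := fun n s =>
  if k ≤ n ∧ 0 < k then ∑ t ∈ range (n - k + 1), conjugator M k (n - k) t * M t s
  else (1 : Matrix ℕ ℕ R) n s

lemma conjugator_of_lt {n : ℕ} (h : n < k) (s : ℕ) :
    conjugator M k n s = (1 : Matrix ℕ ℕ R) n s := by
  rw [conjugator, if_neg (by omega)]

lemma conjugator_add (hk : 0 < k) (n s : ℕ) :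
    conjugator M k (n + k) s = ∑ t ∈ range (n + 1), conjugator M k n t * M t s := by
  rw [conjugator, if_pos (by omega), Nat.add_sub_cancel]

lemma bandedAbove_conjugator (hM : BandedAbove M k) (hk : 0 < k) :
    BandedAbove (conjugator M k) 0 := by
  intro n s h
  obtain hn | ⟨n, rfl⟩ := (Nat.lt_or_ge n k).imp_right Nat.exists_eq_add_of_le'
  · rw [conjugator_of_lt hn, Matrix.one_apply_ne (by omega)]
  · rw [conjugator_add hk]
    exact sum_eq_zero fun t ht => by rw [hM t s (by simp at ht; omega), mul_zero]

lemma conjugator_apply_self_ne_zero [NoZeroDivisors R] [Nontrivial R] (hM : BandedAbove M k)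
    (hk : 0 < k) (hdiag : ∀ n, M n (n + k) ≠ 0) (n : ℕ) : conjugator M k n n ≠ 0 := by
  induction n using Nat.strong_induction_on with
  | _ n ih =>
    obtain hn | ⟨n, rfl⟩ := (Nat.lt_or_ge n k).imp_right Nat.exists_eq_add_of_le'
    · simp [conjugator_of_lt hn]
    · rw [conjugator_add hk, sum_range_succ, sum_eq_zero fun t ht => ?_, zero_add]
      · exact mul_ne_zero (ih n (by omega)) (hdiag n)
      · rw [hM t (n + k) (by simp at ht; omega), mul_zero]

lemma shiftMatrix_matMul_conjugator (hM : BandedAbove M k) (hk : 0 < k) :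
    matMul (shiftMatrix k) (conjugator M k) = matMul (conjugator M k) M := by
  ext n s
  rw [shiftMatrix_matMul, conjugator_add hk,
    matMul_apply_of_bandedAbove (bandedAbove_conjugator hM hk), add_zero]

end Conjugator

end RowFiniteMatrix

lemma single_apply_zero_fin_one (μ : Fin 1 →₀ ℕ) : Finsupp.single 0 (μ 0) = μ :=
  (Finsupp.unique_single μ).symm

lemma const_apply_zero_fin_one (k : Fin 1 → ℕ) : (fun _ => k 0) = k :=
  funext fun i => by rw [Subsingleton.elim i 0]

lemma coeff_single_mul {R : Type*} [Semiring R] (φ ψ : MvPowerSeries (Fin 1) R) (μ : ℕ) :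
    MvPowerSeries.coeff (Finsupp.single 0 μ) (φ * ψ) = ∑ ab ∈ antidiagonal μ,
      MvPowerSeries.coeff (Finsupp.single 0 ab.1) φ *
        MvPowerSeries.coeff (Finsupp.single 0 ab.2) ψ := by
  rw [MvPowerSeries.coeff_mul]
  refine sum_nbij' (fun ab => (ab.1 0, ab.2 0))
    (fun ab => (Finsupp.single 0 ab.1, Finsupp.single 0 ab.2)) ?_ ?_ ?_ ?_ ?_
  · intro ab h
    simpa using congrArg (· 0) (mem_antidiagonal.1 h)
  · intro ab h
    simpa [← Finsupp.single_add] using (mem_antidiagonal.1 h)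
  · intro ab _
    simp [single_apply_zero_fin_one]
  · intro ab _
    simp
  · intro ab _
    simp [single_apply_zero_fin_one]

namespace Op

section CharacteristicFree

omit [CharZero K]

variable {P Q : Op K} {A : Matrix ℕ ℕ K} {c : ℕ}

/-- The coefficient of `x^μ ∂^m` in `P`. -/
def coeff (P : Op K) (m μ : ℕ) : K := MvPowerSeries.coeff (Finsupp.single 0 μ) (P fun _ => m)

lemma coeff_apply (P : Op K) (k : Fin 1 → ℕ) (μ : Fin 1 →₀ ℕ) :
    MvPowerSeries.coeff μ (P k) = P.coeff (k 0) (μ 0) := by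
  rw [coeff, single_apply_zero_fin_one, const_apply_zero_fin_one]

@[ext]
lemma ext_coeff (h : ∀ m μ, P.coeff m μ = Q.coeff m μ) : P = Q :=
  funext fun k => MvPowerSeries.ext fun μ => by rw [coeff_apply, coeff_apply, h]

lemma piMap_apply (P : Op K) (k : Fin 1 → ℕ) : piMap P k = P.coeff (k 0) 0 := by
  rw [piMap, ← MvPowerSeries.coeff_zero_eq_constantCoeff_apply, coeff_apply]
  rfl

def OrderLE (P : Op K) (c : ℕ) : Prop := ∀ m μ, μ + c < m → P.coeff m μ = 0

lemma coeff_single_Dmulti (j : ℕ) (b : MvPowerSeries (Fin 1) K) (β : ℕ) :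
    MvPowerSeries.coeff (Finsupp.single 0 β) (Dmulti (fun _ => j) b) =
      (β + j).descFactorial j * MvPowerSeries.coeff (Finsupp.single 0 (β + j)) b := by
  have hidx : Finsupp.single 0 β + Finsupp.equivFunOnFinite.symm (fun _ => j) =
      Finsupp.single (0 : Fin 1) (β + j) := by
    rw [← single_apply_zero_fin_one (_ + _)]
    simp
  change (∏ i, (((Finsupp.single 0 β : Fin 1 →₀ ℕ) i + j).factorial /
    ((Finsupp.single 0 β : Fin 1 →₀ ℕ) i).factorial : ℕ) : K) * _ = _
  rw [hidx, Fin.prod_univ_one, Finsupp.single_eq_same, Nat.descFactorial_eq_div (by omega),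
    Nat.add_sub_cancel]

lemma coeff_mul_Dmulti (P Q : Op K) (κ j l μ : ℕ) :
    MvPowerSeries.coeff (Finsupp.single 0 μ) (P (fun _ => κ) * Dmulti (fun _ => j) (Q fun _ => l)) =
      ∑ ab ∈ antidiagonal μ, ((ab.2 + j).descFactorial j : K) * P.coeff κ ab.1 *
        Q.coeff l (ab.2 + j) := by
  rw [coeff_single_mul]
  refine sum_congr rfl fun ab _ => ?_
  rw [coeff_single_Dmulti, coeff, coeff]
  ring

lemma coeff_opMul (hP : OrderLE P c) (Q : Op K) {N : ℕ} (m μ : ℕ) (hN : μ + c < N) :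
    (opMul P Q).coeff m μ = ∑ κ ∈ range N, ∑ j ∈ range N, ∑ ab ∈ antidiagonal μ,
      if κ ≤ m + j then (κ.choose j * (ab.2 + j).descFactorial j : K) * P.coeff κ ab.1 *
        Q.coeff (m + j - κ) (ab.2 + j) else 0 := by
  set e := (Equiv.funUnique (Fin 1) ℕ).symm
  set T : ℕ → ℕ → K := fun κ j => ∑ ab ∈ antidiagonal μ,
      if κ ≤ m + j then (κ.choose j * (ab.2 + j).descFactorial j : K) * P.coeff κ ab.1 *
        Q.coeff (m + j - κ) (ab.2 + j) else 0
  have hT : ∀ κ j, (N ≤ κ ∨ N ≤ j) → T κ j = 0 := fun κ j h => sum_eq_zero fun ab hab => by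
    have := mem_antidiagonal.1 hab
    by_cases hκ : N ≤ κ
    · simp [hP κ ab.1 (by omega)]
    · simp [Nat.choose_eq_zero_of_lt (show κ < j by omega)]
  calc (opMul P Q).coeff m μ = ∑ᶠ κ, ∑ᶠ j, T κ j := by
        change ∑ᶠ kf, ∑ᶠ jf, _ = _
        rw [← finsum_comp_equiv e]
        refine finsum_congr fun κ => ?_
        rw [← finsum_comp_equiv e]
        refine finsum_congr fun j => ?_
        have he : ∀ x, e x = fun _ => x := fun _ => rfl
        simp only [he, Pi.le_def, Fin.prod_univ_one, forall_const]
        by_cases hj : j ≤ κ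
        · by_cases hm : κ ≤ m + j
          · simp only [T, hj, hm, true_and, show κ - j ≤ m by omega, if_true,
              show m - (κ - j) = m + j - κ by omega, coeff_mul_Dmulti, mul_sum]
            exact sum_congr rfl fun ab _ => by ring
          · simp [T, hm, show ¬ κ - j ≤ m by omega]
        · simp [T, hj, Nat.choose_eq_zero_of_lt (not_le.1 hj)]
    _ = _ := by
        rw [finsum_eq_sum_range fun κ hκ => ?_]
        · exact sum_congr rfl fun κ _ => finsum_eq_sum_range fun j hj => hT κ j (.inr hj)
        · exact finsum_eq_zero_of_forall_eq_zero fun j => hT κ j (.inl hκ)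

lemma le_ord {m μ : ℕ} (h : P.coeff m μ ≠ 0) : (((m - μ : ℤ) : ℝ) : EReal) ≤ ord P :=
  le_iSup_of_le (fun _ => m) <| le_iSup_of_le (Finsupp.single 0 μ) <| le_iSup_of_le h <| by
    simp [dg, dgF]

lemma ord_le (hP : OrderLE P c) : ord P ≤ (((c : ℤ) : ℝ) : EReal) := by
  refine iSup_le fun k => iSup_le fun μ => iSup_le fun h => ?_
  rw [coeff_apply] at h
  have : k 0 ≤ μ 0 + c := not_lt.1 fun hlt => h (hP _ _ hlt)
  rw [← const_apply_zero_fin_one k, ← single_apply_zero_fin_one μ]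
  simp only [dg, dgF, Fin.sum_univ_one, Finsupp.sum_single_index, EReal.coe_le_coe_iff,
    Int.cast_le]
  omega

lemma orderLE_of_ord_le (h : ord P ≤ (((c : ℤ) : ℝ) : EReal)) : OrderLE P c := by
  intro m μ hlt
  by_contra hne
  have := (le_ord hne).trans h
  simp only [EReal.coe_le_coe_iff, Int.cast_le] at this
  omega

/-- `act P n s` is the coefficient of `∂^s` in `π(∂^n P)`, so that `act P` is the matrix of the
right action of `P` on `F`. -/
def act (P : Op K) : Matrix ℕ ℕ K := fun n s =>
  ∑ i ∈ range (n + 1), if n ≤ s + i then (n.descFactorial i : K) * P.coeff (s + i - n) i else 0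

lemma bandedAbove_act (hP : OrderLE P c) : BandedAbove (act P) c := fun n s h =>
  sum_eq_zero fun i hi => by
    simp only [mem_range] at hi
    simp [hP (s + i - n) i (by omega)]

section Expansion

/-- Both `act (opMul P Q) n s` and `∑ t, act P n t * act Q t s` expand into the four-fold sum of
these terms, indexed by a term `x^a ∂^κ` of `P`, the number `j` of its derivatives that fall on
`Q`, and the power `x^β` of the differentiated coefficient of `Q`. -/
def mulSummand (P Q : Op K) (n s a β κ j : ℕ) : K :=
  if n + κ ≤ s + (a + β) + j then
    (n.descFactorial (a + β) * κ.choose j * (β + j).descFactorial j : K) * P.coeff κ a *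
      Q.coeff (s + (a + β) + j - (n + κ)) (β + j)
  else 0

variable {n s a β κ j : ℕ}

lemma mulSummand_eq_zero_of_lt_add (h : n < a + β) : mulSummand P Q n s a β κ j = 0 := by
  simp [mulSummand, Nat.descFactorial_eq_zero_iff_lt.2 h]

lemma mulSummand_eq_zero_of_lt (h : κ < j) : mulSummand P Q n s a β κ j = 0 := by
  simp [mulSummand, Nat.choose_eq_zero_of_lt h]

lemma act_opMul_eq_sum_mulSummand (hP : OrderLE P c) (Q : Op K) (n s : ℕ) :
    act (opMul P Q) n s = ∑ a ∈ range (n + 1), ∑ β ∈ range (n + 1),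
      ∑ κ ∈ range (n + c + 1), ∑ j ∈ range (n + c + 1), mulSummand P Q n s a β κ j := calc
  act (opMul P Q) n s = ∑ i ∈ range (n + 1), ∑ κ ∈ range (n + c + 1), ∑ j ∈ range (n + c + 1),
      ∑ ab ∈ antidiagonal i, mulSummand P Q n s ab.1 ab.2 κ j := by
    rw [act]
    refine sum_congr rfl fun i hi => ?_
    have hi : i ≤ n := Nat.lt_succ_iff.1 (mem_range.1 hi)
    split_ifs with hni
    · rw [coeff_opMul hP Q _ _ (by omega : i + c < n + c + 1), mul_sum]
      refine sum_congr rfl fun κ _ => ?_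
      rw [mul_sum]
      refine sum_congr rfl fun j _ => ?_
      rw [mul_sum]
      refine sum_congr rfl fun ⟨a, β⟩ hab => ?_
      obtain rfl : a + β = i := mem_antidiagonal.1 hab
      by_cases hκ : κ ≤ s + (a + β) - n + j
      · rw [if_pos hκ, mulSummand, if_pos (by omega),
          show s + (a + β) - n + j - κ = s + (a + β) + j - (n + κ) by omega]
        ring
      · rw [if_neg hκ, mulSummand, if_neg (by omega), mul_zero]
    · refine (sum_eq_zero fun κ _ => sum_eq_zero fun j _ => sum_eq_zero fun ab hab => ?_).symm
      obtain rfl := mem_antidiagonal.1 hab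
      by_cases hj : j ≤ κ
      · exact if_neg (by omega)
      · exact mulSummand_eq_zero_of_lt (by omega)
  _ = ∑ i ∈ range (n + 1), ∑ ab ∈ antidiagonal i, ∑ κ ∈ range (n + c + 1),
      ∑ j ∈ range (n + c + 1), mulSummand P Q n s ab.1 ab.2 κ j :=
    sum_congr rfl fun i _ => (sum_congr rfl fun κ _ => sum_comm).trans sum_comm
  _ = _ := sum_range_sum_antidiagonal (f := fun a β => ∑ κ ∈ range (n + c + 1),
      ∑ j ∈ range (n + c + 1), mulSummand P Q n s a β κ j) fun a β h =>
    sum_eq_zero fun κ _ => sum_eq_zero fun j _ => mulSummand_eq_zero_of_lt_add (by omega)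

lemma sum_antidiagonal_mulSummand (ha : a ≤ n) (b : ℕ) :
    ∑ βj ∈ antidiagonal b, mulSummand P Q n s a βj.1 κ βj.2 =
      (n.descFactorial a : K) * P.coeff κ a * (if n - a + κ ≤ s + b then
        ((n - a + κ).descFactorial b : K) * Q.coeff (s + b - (n - a + κ)) b else 0) := by
  split_ifs with hb
  · rw [Nat.add_descFactorial_eq, Nat.cast_sum, sum_mul, mul_sum]
    refine sum_congr rfl fun ⟨β, j⟩ hβj => ?_
    obtain rfl : β + j = b := mem_antidiagonal.1 hβj
    have h1 : (n.descFactorial a * (n - a).descFactorial β : K) = n.descFactorial (a + β) := by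
      rw [← Nat.descFactorial_mul_descFactorial (Nat.le_add_right a β), Nat.add_sub_cancel_left]
      push_cast
      ring
    have h2 : ((β + j).choose β * κ.descFactorial j : K) =
        κ.choose j * (β + j).descFactorial j := by
      rw [Nat.descFactorial_eq_factorial_mul_choose, Nat.descFactorial_eq_factorial_mul_choose,
        Nat.choose_symm_add]
      push_cast
      ring
    rw [mulSummand, if_pos (by omega),
      show s + (β + j) - (n - a + κ) = s + (a + β) + j - (n + κ) by omega, ← h1]
    push_cast
    linear_combination -(n.descFactorial a * (n - a).descFactorial β : K) * P.coeff κ a *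
      Q.coeff (s + (a + β) + j - (n + κ)) (β + j) * h2
  · rw [mul_zero]
    exact sum_eq_zero fun βj hβj => if_neg (by have := mem_antidiagonal.1 hβj; omega)

lemma descFactorial_mul_coeff_mul_act (hP : OrderLE P c) (Q : Op K) (ha : a ≤ n) (κ : ℕ) :
    (n.descFactorial a : K) * P.coeff κ a * act Q (n - a + κ) s =
      ∑ β ∈ range (n + 1), ∑ j ∈ range (n + c + 1), mulSummand P Q n s a β κ j := by
  by_cases hκ : a + c < κ
  · simp [mulSummand, hP κ a hκ]
  calc _ = ∑ b ∈ range (n - a + κ + 1), ∑ βj ∈ antidiagonal b,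
          mulSummand P Q n s a βj.1 κ βj.2 := by
        rw [act, mul_sum]
        exact sum_congr rfl fun b _ => (sum_antidiagonal_mulSummand ha b).symm
    _ = ∑ β ∈ range (n - a + κ + 1), ∑ j ∈ range (n - a + κ + 1), mulSummand P Q n s a β κ j :=
        sum_range_sum_antidiagonal (f := fun β j => mulSummand P Q n s a β κ j) fun β j h => by
          by_cases hβ : n < a + β
          · exact mulSummand_eq_zero_of_lt_add hβ
          · exact mulSummand_eq_zero_of_lt (by omega)
    _ = _ := by
        refine (sum_range_eq_sum_range (L := n - a + 1) (fun β hβ => ?_) (by omega)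
          (by omega)).trans (sum_congr rfl fun β _ => ?_)
        · exact sum_eq_zero fun j _ => mulSummand_eq_zero_of_lt_add (by omega)
        · exact sum_range_eq_sum_range (L := κ + 1)
            (fun j hj => mulSummand_eq_zero_of_lt (by omega)) (by omega) (by omega)

lemma matMul_act_eq_sum_mulSummand (hP : OrderLE P c) (Q : Op K) (n s : ℕ) :
    matMul (act P) (act Q) n s = ∑ a ∈ range (n + 1), ∑ β ∈ range (n + 1),
      ∑ κ ∈ range (n + c + 1), ∑ j ∈ range (n + c + 1), mulSummand P Q n s a β κ j := calc
  matMul (act P) (act Q) n s = ∑ a ∈ range (n + 1), ∑ t ∈ range (n + c + 1), if n - a ≤ t then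
      (n.descFactorial a : K) * P.coeff (t - (n - a)) a * act Q t s else 0 := by
    rw [matMul_apply_of_bandedAbove (bandedAbove_act hP), ← sum_comm]
    refine sum_congr rfl fun t _ => ?_
    rw [act, sum_mul]
    refine sum_congr rfl fun a ha => ?_
    have ha : a ≤ n := Nat.lt_succ_iff.1 (mem_range.1 ha)
    simp only [show n ≤ t + a ↔ n - a ≤ t by omega, ite_mul, zero_mul,
      show t + a - n = t - (n - a) by omega]
  _ = ∑ a ∈ range (n + 1), ∑ κ ∈ range (n + c + 1),
      (n.descFactorial a : K) * P.coeff κ a * act Q (n - a + κ) s := by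
    refine sum_congr rfl fun a ha => ?_
    simp only [mem_range] at ha
    refine sum_range_ite_le_sub (f := fun κ t => (n.descFactorial a : K) * P.coeff κ a * act Q t s)
      (d := n - a) (by omega) fun κ hκ => ?_
    rw [hP κ a (by omega), mul_zero, zero_mul]
  _ = _ := sum_congr rfl fun a ha => (sum_congr rfl fun κ _ =>
    descFactorial_mul_coeff_mul_act hP Q (Nat.lt_succ_iff.1 (mem_range.1 ha)) κ).trans sum_comm

end Expansion

lemma act_opMul (hP : OrderLE P c) (Q : Op K) : act (opMul P Q) = matMul (act P) (act Q) := by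
  ext n s
  rw [act_opMul_eq_sum_mulSummand hP, matMul_act_eq_sum_mulSummand hP]

lemma act_zero_apply (P : Op K) (s : ℕ) : act P 0 s = P.coeff s 0 := by
  simp [act]

lemma coeff_delPow (k m μ : ℕ) :
    (delPow k : Op K).coeff m μ = if m = k ∧ μ = 0 then 1 else 0 := by
  by_cases hm : m = k
  · subst hm
    simp [coeff, delPow, MvPowerSeries.coeff_one]
  · simp [coeff, delPow, hm, funext_iff]

lemma opOne_eq_delPow_zero : (opOne : Op K) = delPow 0 := rfl

lemma orderLE_delPow (k : ℕ) : OrderLE (delPow k : Op K) k := fun m μ h => by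
  rw [coeff_delPow, if_neg (by omega)]

lemma act_delPow (k : ℕ) : act (delPow k : Op K) = shiftMatrix k := by
  ext n s
  simp only [act, coeff_delPow, shiftMatrix, Matrix.of_apply]
  rw [sum_range_succ']
  simp only [Nat.add_one_ne_zero, and_false, if_false, mul_zero, ite_self, sum_const_zero,
    zero_add, Nat.descFactorial_zero, Nat.cast_one, one_mul, and_true, add_zero]
  split_ifs <;> first | rfl | (exfalso; omega)

lemma act_opOne : act (opOne : Op K) = 1 := by
  rw [opOne_eq_delPow_zero, act_delPow, shiftMatrix_zero]

lemma liftF_single_one (n : ℕ) : liftF (Finsupp.single (fun _ => n) 1) = (delPow n : Op K) := by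
  funext k
  by_cases hk : k = fun _ => n <;> simp [liftF, delPow, hk]

lemma coeff_opComp (P : Op K) (d : ℤ) (m μ : ℕ) :
    (opComp P d).coeff m μ = if (m : ℤ) - μ = d then P.coeff m μ else 0 := by
  change (if ((dg fun _ => m : ℕ) : ℤ) - (dgF (Finsupp.single 0 μ) : ℕ) = d then _ else 0) = _
  simp [dg, dgF, coeff]

lemma act_opComp (P : Op K) (d : ℤ) (n s : ℕ) :
    act (opComp P d) n s = if (s : ℤ) - n = d then act P n s else 0 := by
  unfold act
  split_ifs with h
  · refine sum_congr rfl fun i _ => ?_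
    rw [coeff_opComp]
    split_ifs <;> first | rfl | (exfalso; omega)
  · refine sum_eq_zero fun i _ => ?_
    rw [coeff_opComp]
    split_ifs <;> first | rfl | (exfalso; omega) | simp

lemma act_apply_add_ne_zero_of_regular {k : ℕ} (hreg : ∀ f : (Fin 1 → ℕ) →₀ K, f ≠ 0 →
    piMap (opMul (liftF f) (opComp P (k : ℤ))) ≠ 0) (n : ℕ) : act P n (n + k) ≠ 0 := by
  have hpi (t : Fin 1 → ℕ) :
      piMap (opMul (liftF (Finsupp.single (fun _ => n) 1)) (opComp P k)) t =
        if (t 0 : ℤ) - n = k then act P n (t 0) else 0 := by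
    rw [liftF_single_one, piMap_apply, ← act_zero_apply, act_opMul (orderLE_delPow n),
      act_delPow, shiftMatrix_matMul, zero_add, act_opComp]
  intro h
  refine hreg (Finsupp.single (fun _ => n) 1) (Finsupp.single_ne_zero.2 one_ne_zero)
    (funext fun t => ?_)
  rw [hpi, Pi.zero_apply]
  split_ifs with ht
  · rwa [show t 0 = n + k by omega]
  · rfl

/-- Solves `act P = A` for the coefficients of `P` by recursion on the power `μ` of `x`, using that
`P.coeff m μ` enters `act P μ m` with the factor `μ!` and `act P μ` otherwise involves only lower
powers of `x`. -/
def ofActCoeff (A : Matrix ℕ ℕ K) (m μ : ℕ) : K :=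
  (μ.factorial : K)⁻¹ * (A μ m - ∑ j : Fin μ,
    if μ ≤ m + j then (μ.descFactorial j : K) * ofActCoeff A (m + j - μ) j else 0)
termination_by μ

lemma ofActCoeff_eq (A : Matrix ℕ ℕ K) (m μ : ℕ) : ofActCoeff A m μ = (μ.factorial : K)⁻¹ *
    (A μ m - ∑ j ∈ range μ,
      if μ ≤ m + j then (μ.descFactorial j : K) * ofActCoeff A (m + j - μ) j else 0) := by
  rw [ofActCoeff, Fin.sum_univ_eq_sum_range
    (fun j => if μ ≤ m + j then (μ.descFactorial j : K) * ofActCoeff A (m + j - μ) j else 0)]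

def ofAct (A : Matrix ℕ ℕ K) : Op K := fun k ν => ofActCoeff A (k 0) (ν 0)

lemma coeff_ofAct (A : Matrix ℕ ℕ K) (m μ : ℕ) : (ofAct A).coeff m μ = ofActCoeff A m μ := by
  change ofActCoeff A ((fun _ => m : Fin 1 → ℕ) 0) ((Finsupp.single 0 μ : Fin 1 →₀ ℕ) 0) = _
  rw [Finsupp.single_eq_same]

lemma orderLE_ofAct (hA : BandedAbove A c) : OrderLE (ofAct A) c := by
  intro m μ h
  rw [coeff_ofAct]
  induction μ using Nat.strong_induction_on generalizing m with
  | _ μ ih =>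
    rw [ofActCoeff_eq, hA μ m (by omega), sum_eq_zero fun j hj => ?_, sub_zero, mul_zero]
    rw [mem_range] at hj
    split_ifs
    · rw [ih j hj _ (by omega), mul_zero]
    · rfl

lemma act_apply_eq_sum_add (P : Op K) (μ m : ℕ) : act P μ m = ∑ j ∈ range μ,
    (if μ ≤ m + j then (μ.descFactorial j : K) * P.coeff (m + j - μ) j else 0) +
      μ.factorial * P.coeff m μ := by
  rw [act, sum_range_succ, if_pos (by omega), Nat.descFactorial_self, Nat.add_sub_cancel]

end CharacteristicFree

variable {A : Matrix ℕ ℕ K} {c : ℕ}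

lemma act_ofAct (A : Matrix ℕ ℕ K) : act (ofAct A) = A := by
  ext μ m
  simp only [act_apply_eq_sum_add, coeff_ofAct]
  rw [ofActCoeff_eq, mul_inv_cancel_left₀ (Nat.cast_ne_zero.2 (Nat.factorial_ne_zero μ)),
    add_sub_cancel]

lemma ofAct_act (P : Op K) : ofAct (act P) = P := by
  ext m μ
  rw [coeff_ofAct]
  induction μ using Nat.strong_induction_on generalizing m with
  | _ μ ih =>
    have hsum := sum_congr rfl fun j (hj : j ∈ range μ) =>
      congrArg (fun x => if μ ≤ m + j then (μ.descFactorial j : K) * x else 0)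
        (ih j (mem_range.1 hj) (m + j - μ))
    rw [ofActCoeff_eq, hsum, act_apply_eq_sum_add, add_sub_cancel_left,
      inv_mul_cancel_left₀ (Nat.cast_ne_zero.2 (Nat.factorial_ne_zero μ))]

lemma act_injective : Function.Injective (act : Op K → Matrix ℕ ℕ K) := fun P Q h => by
  rw [← ofAct_act P, h, ofAct_act]

lemma opMul_ofAct (hA : BandedAbove A c) (B : Matrix ℕ ℕ K) :
    opMul (ofAct A) (ofAct B) = ofAct (matMul A B) :=
  act_injective <| by rw [act_opMul (orderLE_ofAct hA), act_ofAct, act_ofAct, act_ofAct]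

lemma ofAct_one : ofAct (1 : Matrix ℕ ℕ K) = opOne := by
  rw [← act_opOne, ofAct_act]

lemma ofAct_shiftMatrix (k : ℕ) : ofAct (shiftMatrix k : Matrix ℕ ℕ K) = delPow k := by
  rw [← act_delPow, ofAct_act]

end Op

open Op in
/-- If `P ∈ D̂₁^sym` is regular with `ord P = k > 0`, there
is an invertible `S ∈ D̂₁^sym` with `ord S = 0` whose zeroth slice is `1`
(constant term 1: `π(S) = π(1)`) such that `P = S⁻¹ ∂^k S`. -/
theorem schur_dim_one
    (P : Op K) (k : ℕ) (hk : 0 < k) (hord : ord P = (((k : ℤ) : ℝ) : EReal))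
    (hreg : ∀ f : (Fin 1 → ℕ) →₀ K, f ≠ 0 →
      piMap (opMul (liftF f) (opComp P (k : ℤ))) ≠ 0) :
    ∃ S T : Op K,
      opMul S T = opOne ∧ opMul T S = opOne ∧
      ord S = 0 ∧ piMap S = piMap opOne ∧
      opMul (opMul T (delPow k)) S = P := by
  have hM : BandedAbove (act P) k := bandedAbove_act (orderLE_of_ord_le hord.le)
  set C := conjugator (act P) k
  have hC : BandedAbove C 0 := bandedAbove_conjugator hM hk
  have hCdiag : ∀ n, C n n ≠ 0 :=
    conjugator_apply_self_ne_zero hM hk (act_apply_add_ne_zero_of_regular hreg)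
  have hC_zero (s : ℕ) : (ofAct C).coeff s 0 = (opOne : Op K).coeff s 0 := by
    rw [← act_zero_apply, ← act_zero_apply, act_ofAct, act_opOne]
    exact conjugator_of_lt hk s
  refine ⟨ofAct C, ofAct (lowerInv C), ?_, ?_, ?_, ?_, ?_⟩
  · rw [opMul_ofAct hC, matMul_lowerInv hC hCdiag, ofAct_one]
  · rw [opMul_ofAct (bandedAbove_lowerInv C), lowerInv_matMul hC hCdiag, ofAct_one]
  · have h00 : (ofAct C).coeff 0 0 ≠ 0 := by
      simp [hC_zero, opOne_eq_delPow_zero, coeff_delPow]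
    exact le_antisymm (by simpa using ord_le (orderLE_ofAct hC)) (by simpa using le_ord h00)
  · exact funext fun t => by rw [piMap_apply, piMap_apply, hC_zero]
  · rw [← ofAct_shiftMatrix, opMul_ofAct (bandedAbove_lowerInv C),
      opMul_ofAct ((bandedAbove_lowerInv C).matMul (bandedAbove_shiftMatrix k)),
      matMul_assoc (bandedAbove_lowerInv C) (bandedAbove_shiftMatrix k),
      shiftMatrix_matMul_conjugator hM hk, ← matMul_assoc (bandedAbove_lowerInv C) hC,
      lowerInv_matMul hC hCdiag, one_matMul, ofAct_act]

end
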